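/- The Lie algebra Φ' (brackets [e₁,e₄]=[e₂,e₃]=-e₁, [e₂,e₄]=-(1/2)e₂, [e₃,e₄]=-(1/2)e₃) has spectrum {0, 1/2, 1/2, 1}: for the Frobenius functional F=e₁*, the principal element is e₄ and the characteristic polynomial of ad(e₄) is x(x-1/2)²(x-1). -/

import Mathlib

/-! `ad e₄` is diagonal in the basis `e₁, …, e₄`, with eigenvalues `1, 1/2, 1/2, 0`; in particular
`e₁*([e₄, x]) = e₁*(x)`, so `e₄` is the principal element of `e₁*`. -/

open Polynomial

noncomputable section

/-- The bracket of Φ′ on `Fin 4 → ℂ`, basis `e₁,…,e₄` indexed `0,…,3`: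
`[e₁,e₄]=[e₂,e₃]=-e₁`, `[e₂,e₄]=-(1/2)e₂`, `[e₃,e₄]=-(1/2)e₃`. -/
def brPhi' (x y : Fin 4 → ℂ) : Fin 4 → ℂ :=
  ![ -(x 0 * y 3 - x 3 * y 0) - (x 1 * y 2 - x 2 * y 1),
     -(1/2) * (x 1 * y 3 - x 3 * y 1),
     -(1/2) * (x 2 * y 3 - x 3 * y 2),
     0 ]

theorem brPhi'_single_three (x : Fin 4 → ℂ) :
    brPhi' (Pi.single 3 1) x = (Matrix.diagonal ![1, 1/2, 1/2, 0]).mulVec x := by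
  ext i
  fin_cases i <;> simp [brPhi', Matrix.mulVec_diagonal]

/-- Φ′ has spectrum `{0, 1/2, 1/2, 1}`: for the Frobenius functional
`F = e₁*` the principal element is `e₄`, and the characteristic polynomial of
`ad e₄` is `x (x - 1/2)² (x - 1)`. -/
theorem phi'_spectrum :
    (∀ x : Fin 4 → ℂ, brPhi' (Pi.single 3 1) x 0 = x 0) ∧
    ∃ M : Matrix (Fin 4) (Fin 4) ℂ,
      (∀ x : Fin 4 → ℂ, M.mulVec x = brPhi' (Pi.single 3 1) x) ∧
      M.charpoly = X * (X - C (1/2 : ℂ)) ^ 2 * (X - 1) := by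
  refine ⟨fun x => ?_, Matrix.diagonal ![1, 1/2, 1/2, 0],
    fun x => (brPhi'_single_three x).symm, ?_⟩
  · simp [brPhi'_single_three, Matrix.mulVec_diagonal]
  · rw [Matrix.charpoly_diagonal, Fin.prod_univ_four]
    simp only [Matrix.cons_val, map_zero, map_one, sub_zero]
    ring
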